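/- arXiv:2402.14986 — 2 statements merged into one kernel-verified Lean document; each statement's English description precedes it below -/
import Mathlib

section
/- Let n ≥ 1, let A be an abelian group, and let f : 𝒢_n → A be an edge reconstruction invariant, i.e. a function satisfying f([G]) = f([G']) whenever ED(G) = ED(G'). Then there is a unique function f̂ from the image ι_n(𝒢_n) ⊆ K₀(Γ_{n,n−1}) to A such that f̂(ι_n[G]) = f([G]) for every [G] ∈ 𝒢_n; that is, f factors uniquely through ι_n. -/
open SimpleGraph

/-- A finite simple graph, packaged with its (finite) vertex type. -/
structure FGraph : Type 1 where
  V : Type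
  [finV : Finite V]
  graph : SimpleGraph V

attribute [instance] FGraph.finV

namespace FGraph

/-- Two finite graphs are isomorphic if there is a graph isomorphism between them. -/
def IsIsoTo (G H : FGraph) : Prop := Nonempty (G.graph ≃g H.graph)

instance setoid : Setoid FGraph where
  r := IsIsoTo
  iseqv := ⟨fun G => ⟨RelIso.refl G.graph.Adj⟩, fun ⟨e⟩ => ⟨e.symm⟩, fun ⟨e⟩ ⟨f⟩ => ⟨e.trans f⟩⟩

end FGraph

/-- Isomorphism classes of finite simple graphs. -/
def GraphClass : Type 1 := Quotient FGraph.setoid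

namespace FGraph

/-- The isomorphism class of a finite graph. -/
def cls (G : FGraph) : GraphClass := Quotient.mk _ G

/-- The number of edges of a finite graph. -/
noncomputable def edgeCount (G : FGraph) : ℕ := G.graph.edgeSet.ncard

/-- The edge-deleted subgraph `G - e`: same vertices, with the edge `e` removed. -/
def deleteEdge (G : FGraph) (e : Sym2 G.V) : FGraph :=
  { V := G.V, graph := G.graph.deleteEdges {e} }

/-- The multiset of edge-deleted subgraphs of `G` (one for each edge), as graphs. -/
noncomputable def deckGraphs (G : FGraph) : Multiset FGraph :=
  (G.graph.edgeSet.toFinite.toFinset.val).map fun e => G.deleteEdge e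

/-- The edge deck of `G` : the multiset of isomorphism classes of the edge-deleted
subgraphs `G - e`, one for each edge `e` of `G`. -/
noncomputable def edgeDeck (G : FGraph) : Multiset GraphClass :=
  G.deckGraphs.map cls

lemma exists_of_mem_edgeDeck {G : FGraph} {c : GraphClass} (hc : c ∈ G.edgeDeck) :
    ∃ H : FGraph, H.cls = c ∧ H.edgeCount = G.edgeCount - 1 := by
  classical
  rw [edgeDeck, deckGraphs, Multiset.map_map] at hc
  obtain ⟨e, he, rfl⟩ := Multiset.mem_map.mp hc
  refine ⟨G.deleteEdge e, rfl, ?_⟩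
  have he' : e ∈ G.graph.edgeSet := by
    simpa using (Set.Finite.mem_toFinset _).mp he
  simp only [edgeCount, deleteEdge, SimpleGraph.edgeSet_deleteEdges]
  exact Set.ncard_sdiff_singleton_of_mem he'

/-- The disjoint union of two finite graphs. -/
def disjUnion (G H : FGraph) : FGraph :=
  { V := G.V ⊕ H.V, graph := G.graph ⊕g H.graph }

end FGraph

/-- `𝒢 n` is the set of isomorphism classes of graphs with exactly `n` edges. -/
def GClass (n : ℕ) : Type 1 :=
  {c : GraphClass // ∃ G : FGraph, G.cls = c ∧ G.edgeCount = n}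

/-- Given a graph `G` with `n` edges, sum a function `f` over the edge deck of `G`,
regarded as a multiset of isomorphism classes of graphs with `n - 1` edges. -/
noncomputable def FGraph.edgeDeckSum (n : ℕ) (G : FGraph) (hG : G.edgeCount = n)
    {β : Type*} [AddCommMonoid β] (f : GClass (n - 1) → β) : β :=
  (G.edgeDeck.attach.map fun c => f ⟨c.1, by
    obtain ⟨H, h1, h2⟩ := FGraph.exists_of_mem_edgeDeck c.2
    exact ⟨H, h1, by rw [h2, hG]⟩⟩).sum

/-- The subgroup of relations defining `K₀(Γ_{n,n-1})`: for every graph `G` with `n`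
edges, `[G] = Σ_{C ∈ ED(G)} [C]`. -/
def K0Rel (n : ℕ) : AddSubgroup (FreeAbelianGroup (GClass n ⊕ GClass (n - 1))) :=
  AddSubgroup.closure
    {x | ∃ (G : FGraph) (hG : G.edgeCount = n),
      x = FreeAbelianGroup.of (Sum.inl ⟨G.cls, G, rfl, hG⟩)
        - G.edgeDeckSum n hG (fun c => FreeAbelianGroup.of (Sum.inr c))}

/-- `K₀(Γ_{n,n-1})`: the free abelian group on `𝒢 n ⊔ 𝒢 (n-1)` modulo the edge-deck
relations. -/
abbrev K0Gamma (n : ℕ) : Type 1 :=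
  FreeAbelianGroup (GClass n ⊕ GClass (n - 1)) ⧸ K0Rel n

/-- The map `ι_n : 𝒢 n → K₀(Γ_{n,n-1})` sending a class to its image in the quotient. -/
noncomputable def iotaCls (n : ℕ) (c : GClass n) : K0Gamma n :=
  QuotientAddGroup.mk (FreeAbelianGroup.of (Sum.inl c))

/-- Generalized edge reconstruction fails for `n`-edge graphs with `k` pieces: there are
two distinct multisets of `k` isomorphism classes of graphs with exactly `n` edges whose
total edge decks agree. -/
def GERFails (n k : ℕ) : Prop :=
  ∃ M M' : Multiset FGraph,
    Multiset.card M = k ∧ Multiset.card M' = k ∧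
    (∀ G ∈ M, G.edgeCount = n) ∧ (∀ G ∈ M', G.edgeCount = n) ∧
    M.map FGraph.cls ≠ M'.map FGraph.cls ∧
    (M.map FGraph.edgeDeck).sum = (M'.map FGraph.edgeDeck).sum

/-- `kmin n` is the least `k ≥ 1` for which generalized edge reconstruction fails for
`n`-edge graphs. -/
noncomputable def kmin (n : ℕ) : ℕ := sInf {k | 1 ≤ k ∧ GERFails n k}

/-- The graph `2K₂`: four vertices, two disjoint edges. -/
def twoK2 : FGraph :=
  { V := Fin 4, graph := SimpleGraph.fromEdgeSet {s(0, 1), s(2, 3)} }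

/-- The graph `P₃ ⊔ K₁`: a two-edge path together with an isolated vertex. -/
def p3K1 : FGraph :=
  { V := Fin 4, graph := SimpleGraph.fromEdgeSet {s(0, 1), s(1, 2)} }

/-- The graph `K₃ ⊔ K₁`: a triangle together with an isolated vertex. -/
def k3K1 : FGraph :=
  { V := Fin 4, graph := SimpleGraph.fromEdgeSet {s(0, 1), s(1, 2), s(0, 2)} }

/-- The star `K_{1,3}`: a center vertex adjacent to three leaves. -/
def k13 : FGraph :=
  { V := Fin 4, graph := SimpleGraph.fromEdgeSet {s(0, 1), s(0, 2), s(0, 3)} }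

/-!
Send a class of `𝒢_n` to its edge deck and a class of `𝒢_{n-1}` to itself, both read in the
free abelian group `GraphClass →₀ ℤ`. This respects the relations `[G] = Σ_{C ∈ ED(G)} [C]`,
so it descends to `K₀(Γ_{n,n-1})`; as multisets embed into `GraphClass →₀ ℤ`, the equality
`ι_n [G] = ι_n [G']` forces `ED(G) = ED(G')`. An edge reconstruction invariant is therefore
constant on the fibres of `ι_n`, which is exactly what it takes to factor uniquely through the
image of `ι_n`.
-/

namespace SimpleGraph.Iso

variable {V W : Type*} {G : SimpleGraph V} {G' : SimpleGraph W}

theorem image_edgeSet (f : G ≃g G') : Sym2.map f '' G.edgeSet = G'.edgeSet := by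
  refine f.toHom.image_edgeSet_subset.antisymm fun e he =>
    ⟨Sym2.map f.symm e, f.symm.toHom.map_mem_edgeSet he, ?_⟩
  simp [Sym2.map_map]

def deleteEdges (f : G ≃g G') (s : Set (Sym2 V)) :
    G.deleteEdges s ≃g G'.deleteEdges (Sym2.map f '' s) where
  toEquiv := f.toEquiv
  map_rel_iff' {v w} := by
    simp only [deleteEdges_adj, RelIso.coe_fn_toEquiv, f.map_adj_iff, ← Sym2.map_mk,
      (Sym2.map.injective f.injective).mem_set_image]

end SimpleGraph.Iso

namespace FGraph

theorem cls_deleteEdge_eq {G H : FGraph} (f : G.graph ≃g H.graph) (e : Sym2 G.V) :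
    (G.deleteEdge e).cls = (H.deleteEdge (Sym2.map f e)).cls :=
  Quotient.sound ⟨show G.graph.deleteEdges {e} ≃g H.graph.deleteEdges {Sym2.map f e} from
    Set.image_singleton ▸ f.deleteEdges {e}⟩

theorem edgeDeck_eq_of_isIsoTo {G H : FGraph} (h : G.IsIsoTo H) : G.edgeDeck = H.edgeDeck := by
  classical
  obtain ⟨f⟩ := h
  have hedges : H.graph.edgeSet.toFinite.toFinset =
      G.graph.edgeSet.toFinite.toFinset.image (Sym2.map f) := by
    ext e
    simp [← f.image_edgeSet]
  rw [edgeDeck, deckGraphs, edgeDeck, deckGraphs, hedges,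
    Finset.image_val_of_injOn (Sym2.map.injective f.injective).injOn]
  simp only [Multiset.map_map, Function.comp_def]
  exact Multiset.map_congr rfl fun e _ => cls_deleteEdge_eq f e

variable {n : ℕ} (G : FGraph) (hG : G.edgeCount = n)

theorem edgeDeckSum_val {β : Type*} [AddCommMonoid β] (g : GraphClass → β) :
    G.edgeDeckSum n hG (fun c => g c.1) = (G.edgeDeck.map g).sum := by
  rw [edgeDeckSum, Multiset.attach_map_val']

theorem map_edgeDeckSum {β γ : Type*} [AddCommMonoid β] [AddCommMonoid γ] (φ : β →+ γ)
    (g : GClass (n - 1) → β) :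
    φ (G.edgeDeckSum n hG g) = G.edgeDeckSum n hG (φ ∘ g) := by
  rw [edgeDeckSum, map_multiset_sum, Multiset.map_map]
  rfl

end FGraph

noncomputable def GraphClass.edgeDeck : GraphClass → Multiset GraphClass :=
  Quotient.lift FGraph.edgeDeck fun _ _ => FGraph.edgeDeck_eq_of_isIsoTo

open Classical in
noncomputable def Multiset.toIntFinsupp (α : Type*) : Multiset α →+ (α →₀ ℤ) :=
  (Finsupp.mapRange.addMonoidHom (Nat.castAddMonoidHom ℤ)).comp toFinsupp.toAddMonoidHom

open Classical in
theorem Multiset.toIntFinsupp_injective (α : Type*) :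
    Function.Injective (toIntFinsupp α) := fun _ _ h =>
  toFinsupp.injective (Finsupp.mapRange_injective _ Nat.cast_zero Nat.cast_injective h)

noncomputable def deckHom (n : ℕ) :
    FreeAbelianGroup (GClass n ⊕ GClass (n - 1)) →+ (GraphClass →₀ ℤ) :=
  FreeAbelianGroup.lift fun
    | .inl c => Multiset.toIntFinsupp _ c.1.edgeDeck
    | .inr d => Multiset.toIntFinsupp _ {d.1}

theorem K0Rel_le_ker_deckHom (n : ℕ) : K0Rel n ≤ (deckHom n).ker := by
  rw [K0Rel, AddSubgroup.closure_le]
  rintro _ ⟨G, hG, rfl⟩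
  rw [SetLike.mem_coe, AddMonoidHom.mem_ker, map_sub, sub_eq_zero, FGraph.map_edgeDeckSum]
  simp only [deckHom, Function.comp_def, FreeAbelianGroup.lift_apply_of]
  rw [FGraph.edgeDeckSum_val G hG fun c => Multiset.toIntFinsupp _ {c}]
  change Multiset.toIntFinsupp _ G.edgeDeck = _
  conv_lhs => rw [← Multiset.sum_map_singleton G.edgeDeck, map_multiset_sum, Multiset.map_map]
  rfl

theorem GraphClass.edgeDeck_eq_of_iotaCls_eq {n : ℕ} {c c' : GClass n}
    (h : iotaCls n c = iotaCls n c') : c.1.edgeDeck = c'.1.edgeDeck := by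
  have := congrArg (QuotientAddGroup.lift _ (deckHom n) (K0Rel_le_ker_deckHom n)) h
  simp only [iotaCls, QuotientAddGroup.lift_mk, deckHom, FreeAbelianGroup.lift_apply_of] at this
  exact Multiset.toIntFinsupp_injective _ this

theorem Function.FactorsThrough.existsUnique_range {α β γ : Type*} {f : α → γ} {g : α → β}
    (h : f.FactorsThrough g) : ∃! F : Set.range g → γ, ∀ a, F ⟨g a, a, rfl⟩ = f a := by
  refine ⟨f ∘ Set.rangeSplitting g, fun a => h (Set.apply_rangeSplitting g _), ?_⟩
  rintro F hF
  funext ⟨_, a, rfl⟩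
  exact (hF a).trans (h (Set.apply_rangeSplitting g _)).symm

theorem reconstruction_invariant_factors_general (n : ℕ)
    (A : Type*) (f : GClass n → A)
    (hf : ∀ (G G' : FGraph) (hG : G.edgeCount = n) (hG' : G'.edgeCount = n),
      G.edgeDeck = G'.edgeDeck → f ⟨G.cls, G, rfl, hG⟩ = f ⟨G'.cls, G', rfl, hG'⟩) :
    ∃! fhat : Set.range (iotaCls n) → A,
      ∀ c : GClass n, fhat ⟨iotaCls n c, c, rfl⟩ = f c := by
  refine Function.FactorsThrough.existsUnique_range ?_
  rintro ⟨_, G, rfl, hG⟩ ⟨_, G', rfl, hG'⟩ h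
  exact hf G G' hG hG' (GraphClass.edgeDeck_eq_of_iotaCls_eq h)

/-- any edge reconstruction invariant `f : 𝒢_n → A` valued in an abelian
group factors uniquely through `ι_n : 𝒢_n → K₀(Γ_{n,n-1})`, via a unique function on
the image `ι_n(𝒢_n)`. -/
theorem reconstruction_invariant_factors (n : ℕ) (hn : 1 ≤ n)
    (A : Type*) [AddCommGroup A] (f : GClass n → A)
    (hf : ∀ (G G' : FGraph) (hG : G.edgeCount = n) (hG' : G'.edgeCount = n),
      G.edgeDeck = G'.edgeDeck → f ⟨G.cls, G, rfl, hG⟩ = f ⟨G'.cls, G', rfl, hG'⟩) :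
    ∃! fhat : Set.range (iotaCls n) → A,
      ∀ c : GClass n, fhat ⟨iotaCls n c, c, rfl⟩ = f c :=
  reconstruction_invariant_factors_general n A f hf
end

section
/- Let n, m ≥ 1. If x ∈ ker ε_n ⊆ ℤ[𝒢_n] and y ∈ ker ε_m ⊆ ℤ[𝒢_m], then x·y ∈ ker ε_{n+m} ⊆ ℤ[𝒢_{n+m}], where · is the product induced by disjoint union. In other words, the kernels of the maps ε_n are closed under the multiplication induced by disjoint union of graphs. -/
open SimpleGraph

/-!
Deleting an edge of `G ⊔ H` deletes it either from `G` or from `H`, so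
`ED(G ⊔ H) = {C ⊔ H | C ∈ ED(G)} + {G ⊔ C | C ∈ ED(H)}`. Forgetting the edge-count grading,
i.e. working in `ℤ[GraphClass]` (where `ε_{n+m}(x y)` and `ε_n(x) y` can be compared, while
`𝒢 (n + m - 1)` and `𝒢 (n - 1 + m)` are different types), the maps `ε` thus form a
derivation for the disjoint-union product: `ε(x y) = ε(x) y + x ε(y)`, which vanishes when
`ε x = ε y = 0`.
-/

open Function in
theorem FreeAbelianGroup.map_injective {α β : Type*} {f : α → β} (hf : Injective f) :
    Injective (FreeAbelianGroup.map f) := by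
  have h : toFinsupp.comp (map f) = (Finsupp.mapDomain.addMonoidHom f).comp toFinsupp := by
    ext; simp
  intro x y hxy
  have hxy' := congr(toFinsupp $hxy)
  rw [← AddMonoidHom.comp_apply, ← AddMonoidHom.comp_apply, h] at hxy'
  exact (equivFinsupp α).injective (Finsupp.mapDomain_injective hf hxy')

noncomputable def GClass.incl (k : ℕ) :
    FreeAbelianGroup (GClass k) →+ FreeAbelianGroup GraphClass :=
  FreeAbelianGroup.map Subtype.val

lemma GClass.incl_injective (k : ℕ) : Function.Injective (GClass.incl k) :=
  FreeAbelianGroup.map_injective Subtype.val_injective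

lemma Sym2.map_inl_ne_map_inr {α β : Type*} (e : Sym2 α) (e' : Sym2 β) :
    Sym2.map (Sum.inl : α → α ⊕ β) e ≠ Sym2.map Sum.inr e' := by
  induction e; induction e'; simp

namespace SimpleGraph

variable {V W : Type*} {G : SimpleGraph V} {H : SimpleGraph W}

lemma edgeSet_sum : (G ⊕g H).edgeSet
    = Sym2.map Sum.inl '' G.edgeSet ∪ Sym2.map Sum.inr '' H.edgeSet := by
  refine subset_antisymm ?_ ?_
  · rintro ⟨x | x, y | y⟩ h
    · exact .inl ⟨s(x, y), h, rfl⟩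
    · simp at h
    · simp at h
    · exact .inr ⟨s(x, y), h, rfl⟩
  · rintro _ (⟨⟨x, y⟩, h, rfl⟩ | ⟨⟨x, y⟩, h, rfl⟩) <;> exact h

lemma toFinset_edgeSet_sum_val [Finite V] [Finite W] :
    (G ⊕g H).edgeSet.toFinite.toFinset.val =
      G.edgeSet.toFinite.toFinset.val.map (Sym2.map Sum.inl) +
        H.edgeSet.toFinite.toFinset.val.map (Sym2.map Sum.inr) := by
  have hl := Sym2.map.injective (Sum.inl_injective (α := V) (β := W))
  have hr := Sym2.map.injective (Sum.inr_injective (α := V) (β := W))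
  refine (Multiset.Nodup.ext (Finset.nodup _) ?_).2 fun e => ?_
  · refine Multiset.nodup_add.2 ⟨(Finset.nodup _).map hl, (Finset.nodup _).map hr, ?_⟩
    rw [Multiset.disjoint_left]
    rintro _ he he'
    obtain ⟨e, -, rfl⟩ := Multiset.mem_map.1 he
    obtain ⟨e', -, h⟩ := Multiset.mem_map.1 he'
    exact Sym2.map_inl_ne_map_inr e e' h.symm
  · simp only [Multiset.mem_add, Multiset.mem_map, Finset.mem_val, Set.Finite.mem_toFinset]
    exact Set.ext_iff.1 edgeSet_sum e

lemma sum_deleteEdges_inl (e : Sym2 V) :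
    (G ⊕g H).deleteEdges {Sym2.map Sum.inl e} = G.deleteEdges {e} ⊕g H := by
  ext x y
  induction e using Sym2.ind with
  | _ a b => cases x <;> cases y <;> simp

lemma sum_deleteEdges_inr (e : Sym2 W) :
    (G ⊕g H).deleteEdges {Sym2.map Sum.inr e} = G ⊕g H.deleteEdges {e} := by
  ext x y
  induction e using Sym2.ind with
  | _ a b => cases x <;> cases y <;> simp

end SimpleGraph

instance : Mul GraphClass where
  mul := Quotient.map₂ FGraph.disjUnion fun _ _ ⟨e⟩ _ _ ⟨f⟩ => ⟨e.sumCongr f⟩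

namespace FGraph

lemma edgeCount_disjUnion (G H : FGraph) :
    (G.disjUnion H).edgeCount = G.edgeCount + H.edgeCount := by
  simp only [edgeCount, ← Nat.card_coe_set_eq]
  exact (Nat.card_congr SimpleGraph.edgeSetSumEquiv).trans Nat.card_sum

lemma edgeDeck_disjUnion (G H : FGraph) :
    (G.disjUnion H).edgeDeck =
      G.edgeDeck.map (· * H.cls) + H.edgeDeck.map (G.cls * ·) := by
  -- restated over `G.V ⊕ H.V`, which `(G.disjUnion H).V` is only up to unfolding
  have hdeck : (G.disjUnion H).edgeDeck = (G.graph ⊕g H.graph).edgeSet.toFinite.toFinset.val.map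
      fun e => cls ⟨G.V ⊕ H.V, (G.graph ⊕g H.graph).deleteEdges {e}⟩ :=
    Multiset.map_map _ _ _
  rw [hdeck, SimpleGraph.toFinset_edgeSet_sum_val, Multiset.map_add]
  simp only [edgeDeck, deckGraphs, Multiset.map_map]
  congr 1 <;> refine Multiset.map_congr rfl fun e _ => ?_
  · exact congrArg cls (congrArg (mk _) (SimpleGraph.sum_deleteEdges_inl e))
  · exact congrArg cls (congrArg (mk _) (SimpleGraph.sum_deleteEdges_inr e))

noncomputable def deckSum (G : FGraph) : FreeAbelianGroup GraphClass :=
  (G.edgeDeck.map .of).sum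

lemma deckSum_disjUnion (G H : FGraph) :
    (G.disjUnion H).deckSum = G.deckSum * .of H.cls + .of G.cls * H.deckSum := by
  simp only [deckSum, edgeDeck_disjUnion, Multiset.map_add, Multiset.sum_add, Multiset.map_map,
    Function.comp_def, ← FreeAbelianGroup.of_mul_of, Multiset.sum_map_mul_right,
    Multiset.sum_map_mul_left]

lemma incl_edgeDeckSum (n : ℕ) (G : FGraph) (hG : G.edgeCount = n) :
    GClass.incl (n - 1) (G.edgeDeckSum n hG .of) = G.deckSum := by
  rw [edgeDeckSum, map_multiset_sum, Multiset.map_map, deckSum]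
  conv_rhs => rw [← Multiset.attach_map_val G.edgeDeck, Multiset.map_map]
  rfl

end FGraph

open FGraph GClass in
theorem ker_epsilon_mul_ker_epsilon_general (n m : ℕ)
    (εn : FreeAbelianGroup (GClass n) →+ FreeAbelianGroup (GClass (n - 1)))
    (εm : FreeAbelianGroup (GClass m) →+ FreeAbelianGroup (GClass (m - 1)))
    (εnm : FreeAbelianGroup (GClass (n + m)) →+ FreeAbelianGroup (GClass (n + m - 1)))
    (hεn : ∀ (G : FGraph) (hG : G.edgeCount = n),
      εn (FreeAbelianGroup.of ⟨G.cls, G, rfl, hG⟩) = G.edgeDeckSum n hG FreeAbelianGroup.of)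
    (hεm : ∀ (G : FGraph) (hG : G.edgeCount = m),
      εm (FreeAbelianGroup.of ⟨G.cls, G, rfl, hG⟩) = G.edgeDeckSum m hG FreeAbelianGroup.of)
    (hεnm : ∀ (G : FGraph) (hG : G.edgeCount = n + m),
      εnm (FreeAbelianGroup.of ⟨G.cls, G, rfl, hG⟩)
        = G.edgeDeckSum (n + m) hG FreeAbelianGroup.of)
    (μ : FreeAbelianGroup (GClass n) →+
          FreeAbelianGroup (GClass m) →+ FreeAbelianGroup (GClass (n + m)))
    (hμ : ∀ (c : GClass n) (d : GClass m) (G G' : FGraph),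
      G.cls = c.1 → G'.cls = d.1 →
      ∃ h, μ (FreeAbelianGroup.of c) (FreeAbelianGroup.of d)
        = FreeAbelianGroup.of (⟨(G.disjUnion G').cls, h⟩ : GClass (n + m)))
    (x : FreeAbelianGroup (GClass n)) (y : FreeAbelianGroup (GClass m))
    (hx : εn x = 0) (hy : εm y = 0) :
    εnm (μ x y) = 0 := by
  have leibniz : μ.compr₂ ((incl _).comp εnm) =
      (AddMonoidHom.mul.comp ((incl _).comp εn)).compl₂ (incl _) +
        (AddMonoidHom.mul.comp (incl _)).compl₂ ((incl _).comp εm) := by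
    ext ⟨_, G, rfl, hG⟩ ⟨_, H, rfl, hH⟩
    have hGH : (G.disjUnion H).edgeCount = n + m := by rw [edgeCount_disjUnion, hG, hH]
    have hμGH : μ (.of ⟨G.cls, G, rfl, hG⟩) (.of ⟨H.cls, H, rfl, hH⟩) =
        .of (α := GClass (n + m)) ⟨(G.disjUnion H).cls, G.disjUnion H, rfl, hGH⟩ :=
      (hμ _ _ G H rfl rfl).2
    simp only [AddMonoidHom.compr₂_apply, AddMonoidHom.comp_apply, AddMonoidHom.add_apply,
      AddMonoidHom.compl₂_apply, AddMonoidHom.mul_apply, hμGH]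
    rw [hεnm _ hGH, hεn G hG, hεm H hH, incl_edgeDeckSum, incl_edgeDeckSum,
      incl_edgeDeckSum]
    exact deckSum_disjUnion G H
  have h := congr($leibniz x y)
  simp only [AddMonoidHom.compr₂_apply, AddMonoidHom.comp_apply, AddMonoidHom.add_apply,
    AddMonoidHom.compl₂_apply, hx, hy, map_zero, add_zero] at h
  exact GClass.incl_injective _ (h.trans (map_zero _).symm)

/-- the kernels of the maps `ε_n : ℤ[𝒢_n] → ℤ[𝒢_{n-1}]` (sending a
generator `[G]` to `Σ_{C ∈ ED(G)} [C]`) are closed under the multiplication induced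
by disjoint union (determined on generators by `[G]·[G'] = [G ⊔ G']`). -/
theorem ker_epsilon_mul_ker_epsilon (n m : ℕ) (hn : 1 ≤ n) (hm : 1 ≤ m)
    (εn : FreeAbelianGroup (GClass n) →+ FreeAbelianGroup (GClass (n - 1)))
    (εm : FreeAbelianGroup (GClass m) →+ FreeAbelianGroup (GClass (m - 1)))
    (εnm : FreeAbelianGroup (GClass (n + m)) →+ FreeAbelianGroup (GClass (n + m - 1)))
    (hεn : ∀ (G : FGraph) (hG : G.edgeCount = n),
      εn (FreeAbelianGroup.of ⟨G.cls, G, rfl, hG⟩) = G.edgeDeckSum n hG FreeAbelianGroup.of)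
    (hεm : ∀ (G : FGraph) (hG : G.edgeCount = m),
      εm (FreeAbelianGroup.of ⟨G.cls, G, rfl, hG⟩) = G.edgeDeckSum m hG FreeAbelianGroup.of)
    (hεnm : ∀ (G : FGraph) (hG : G.edgeCount = n + m),
      εnm (FreeAbelianGroup.of ⟨G.cls, G, rfl, hG⟩)
        = G.edgeDeckSum (n + m) hG FreeAbelianGroup.of)
    (μ : FreeAbelianGroup (GClass n) →+
          FreeAbelianGroup (GClass m) →+ FreeAbelianGroup (GClass (n + m)))
    (hμ : ∀ (c : GClass n) (d : GClass m) (G G' : FGraph),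
      G.cls = c.1 → G'.cls = d.1 →
      ∃ h, μ (FreeAbelianGroup.of c) (FreeAbelianGroup.of d)
        = FreeAbelianGroup.of (⟨(G.disjUnion G').cls, h⟩ : GClass (n + m)))
    (x : FreeAbelianGroup (GClass n)) (y : FreeAbelianGroup (GClass m))
    (hx : εn x = 0) (hy : εm y = 0) :
    εnm (μ x y) = 0 :=
  ker_epsilon_mul_ker_epsilon_general n m εn εm εnm hεn hεm hεnm μ hμ x y hx hy
end
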